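/- arXiv:1401.0192 — 2 statements merged into one kernel-verified Lean document; each statement's English description precedes it below -/
import Mathlib

section
/- Let X ∈ L^2 with distribution μ, and let (x^(k))_k be a bounded sequence of N-tuples in (R^d)^N with distortions 𝒢(x^(k)) ≤ c < e_{N−1}(X)² for all k, where 𝒢(x) = E min_{1≤i≤N}|X − x_i|². If along a subsequence some components tend to infinity while the components indexed by a nonempty proper subset I^c converge to limits x_j^∞, then liminf_k 𝒢(x^(φ(k))) ≥ E min_{j∈I^c}|X − x_j^∞|² ≥ e_{|I^c|}(X)² ≥ e_{N−1}(X)², a contradiction. Consequently, any sequence of Lloyd iterates starting from a grid with e(Γ^(0),X) < e_{N−1}(X) is bounded. -/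
/-!
If some point of an `N`-tuple lies very far out, there is a scale `B` such that no other point
has norm in `(B, 3B]` (pigeonhole over the scales `B₀ 3^j`). Dropping the far point and replacing
every other point of norm `> B` by `0` gives `N - 1` points, all of norm `≤ B`; for `‖X‖ < B`
the discarded points are farther from `X` than any of these, so the distortion increases at most
by `4 E[‖X‖² ; ‖X‖ ≥ B]`, which is small once `B₀` is large because `X ∈ L²`. Hence a tuple with
a far point has distortion at least `e_{N-1}(X)² - ε`, contradicting `𝒢 ≤ c < e_{N-1}(X)²`.
-/

open MeasureTheory Filter Topology

open Finset in
theorem exists_forall_notMem_Ioc_of_monotone {α : Type*} [Preorder α] {M : ℕ → α}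
    (hM : Monotone M) (s : Finset α) :
    ∃ j ≤ #s, ∀ a ∈ s, a ∉ Set.Ioc (M j) (M (j + 1)) := by
  by_contra! h
  have hmem (j : Fin (#s + 1)) : ∃ a : s, (a : α) ∈ Set.Ioc (M j) (M (j + 1)) := by
    obtain ⟨a, ha, haI⟩ := h j (Nat.lt_succ_iff.mp j.isLt)
    exact ⟨⟨a, ha⟩, haI⟩
  choose f hf using hmem
  obtain ⟨j, j', hne, heq⟩ := Fintype.exists_ne_map_eq_of_card_lt f (by simp)
  have separated (a b : Fin (#s + 1)) (hab : a < b) : f a ≠ f b := fun hfab =>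
    lt_irrefl (M (a + 1)) <|
      calc M (a + 1) ≤ M b := hM (Nat.succ_le_of_lt hab)
        _ < f b := (hf b).1
        _ = f a := by rw [hfab]
        _ ≤ M (a + 1) := (hf a).2
  rcases hne.lt_or_gt with hlt | hlt
  · exact separated j j' hlt heq
  · exact separated j' j hlt heq.symm

section

variable {E : Type*} [NormedAddCommGroup E]

theorem iInf_dist_sq_le_add_indicator {ι κ : Type*} [Finite ι] [Nonempty ι] [Finite κ]
    [Nonempty κ] {x : ι → E} {y : κ → E} {B : ℝ} (hy : ∀ t, ‖y t‖ ≤ B)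
    (hx : ∀ i, 3 * B < ‖x i‖ ∨ ∃ t, y t = x i) (z : E) :
    ⨅ t, dist z (y t) ^ 2 ≤
      (⨅ i, dist z (x i) ^ 2) + 4 * {w : E | B ≤ ‖w‖}.indicator (fun w => ‖w‖ ^ 2) z := by
  obtain ⟨i, hi⟩ : ∃ i, dist z (x i) ^ 2 = ⨅ i, dist z (x i) ^ 2 := exists_eq_ciInf_of_finite
  have h_tail_nonneg : 0 ≤ {w : E | B ≤ ‖w‖}.indicator (fun w => ‖w‖ ^ 2) z :=
    Set.indicator_nonneg (fun _ _ => by positivity) z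
  rw [← hi]
  rcases hx i with hfar | ⟨t, ht⟩
  · obtain ⟨t⟩ := ‹Nonempty κ›
    have hyt : ⨅ t, dist z (y t) ^ 2 ≤ (‖z‖ + B) ^ 2 :=
      (ciInf_le (Finite.bddBelow_range _) t).trans <| pow_le_pow_left₀ dist_nonneg
        ((dist_eq_norm z (y t) ▸ norm_sub_le _ _).trans (by linarith [hy t])) 2
    have hB : 0 ≤ B := (norm_nonneg _).trans (hy t)
    by_cases hz : B ≤ ‖z‖
    · rw [Set.indicator_of_mem (by exact hz)]
      nlinarith [sq_nonneg (dist z (x i))]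
    · have : ‖z‖ + B ≤ dist z (x i) := by
        rw [dist_comm, dist_eq_norm]
        linarith [norm_sub_norm_le (x i) z]
      nlinarith [norm_nonneg z]
  · calc ⨅ t, dist z (y t) ^ 2 ≤ dist z (y t) ^ 2 := ciInf_le (Finite.bddBelow_range _) t
      _ = dist z (x i) ^ 2 := by rw [ht]
      _ ≤ _ := by linarith

theorem exists_bounded_pred_tuple_of_gap {n : ℕ} (x : Fin (n + 1) → E) {B : ℝ} (hB : 0 ≤ B)
    {i₀ : Fin (n + 1)} (hi₀ : 3 * B < ‖x i₀‖) (hgap : ∀ i, ‖x i‖ ≤ B ∨ 3 * B < ‖x i‖) :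
    ∃ y : Fin n → E, (∀ t, ‖y t‖ ≤ B) ∧ ∀ i, 3 * B < ‖x i‖ ∨ ∃ t, y t = x i := by
  refine ⟨fun t => if ‖x (i₀.succAbove t)‖ ≤ B then x (i₀.succAbove t) else 0,
    fun t => ?_, fun i => ?_⟩
  · dsimp only
    split_ifs with h
    · exact h
    · simpa using hB
  · rcases eq_or_ne i i₀ with rfl | hne
    · exact .inl hi₀
    obtain ⟨t, rfl⟩ := Fin.exists_succAbove_eq hne
    exact (hgap _).symm.imp_right fun h => ⟨t, if_pos h⟩

section Distortion

variable {Ω : Type*} [MeasurableSpace Ω] {P : Measure Ω} {X : Ω → E}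

/-- For empty `ι` the infimum takes the junk value `0`. -/
noncomputable def distortion (P : Measure Ω) (X : Ω → E) {ι : Type*} (y : ι → E) : ℝ :=
  ∫ ω, ⨅ i, dist (X ω) (y i) ^ 2 ∂P

theorem distortion_nonneg {ι : Type*} (y : ι → E) : 0 ≤ distortion P X y :=
  integral_nonneg fun _ => Real.iInf_nonneg fun _ => sq_nonneg _

variable [MeasurableSpace E] [BorelSpace E]

theorem integrable_iInf_dist_sq [IsFiniteMeasure P] (hX : MemLp X 2 P) {ι : Type*} [Finite ι]
    [Nonempty ι] (y : ι → E) : Integrable (fun ω => ⨅ i, dist (X ω) (y i) ^ 2) P := by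
  obtain ⟨i⟩ := ‹Nonempty ι›
  have hmeas : Measurable fun z : E => ⨅ i, dist z (y i) ^ 2 :=
    Measurable.iInf fun i => ((continuous_id.dist continuous_const).pow 2).measurable
  refine ((hX.sub (memLp_const (y i))).norm.integrable_sq).mono'
    (hmeas.comp_aemeasurable hX.1.aemeasurable).aestronglyMeasurable
    (ae_of_all _ fun ω => ?_)
  have h_nonneg : 0 ≤ ⨅ i, dist (X ω) (y i) ^ 2 := le_ciInf fun _ => by positivity
  rw [Real.norm_eq_abs, abs_of_nonneg h_nonneg, Pi.sub_apply, ← dist_eq_norm]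
  exact ciInf_le (Finite.bddBelow_range _) i

theorem integrable_indicator_norm_sq [IsFiniteMeasure P] (hX : MemLp X 2 P) (R : ℝ) :
    Integrable (fun ω => {z : E | R ≤ ‖z‖}.indicator (fun z => ‖z‖ ^ 2) (X ω)) P := by
  have hmeas : Measurable ({z : E | R ≤ ‖z‖}.indicator fun z => ‖z‖ ^ 2) :=
    (continuous_norm.pow 2).measurable.indicator
      (isClosed_le continuous_const continuous_norm).measurableSet
  refine hX.norm.integrable_sq.mono'
    (hmeas.comp_aemeasurable hX.1.aemeasurable).aestronglyMeasurable
    (ae_of_all _ fun ω => ?_)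
  rw [Real.norm_eq_abs, abs_of_nonneg (Set.indicator_nonneg (fun _ _ => by positivity) _)]
  exact Set.indicator_le_self' (fun _ _ => by positivity) _

theorem tendsto_integral_indicator_norm_sq [IsFiniteMeasure P] (hX : MemLp X 2 P) :
    Tendsto (fun R : ℝ => ∫ ω, {z : E | R ≤ ‖z‖}.indicator (fun z => ‖z‖ ^ 2) (X ω) ∂P)
      atTop (𝓝 0) := by
  have h := tendsto_integral_filter_of_dominated_convergence (μ := P) (l := atTop)
    (F := fun (R : ℝ) ω => {z : E | R ≤ ‖z‖}.indicator (fun z => ‖z‖ ^ 2) (X ω))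
    (f := fun _ => 0) _
    (.of_forall fun R => (integrable_indicator_norm_sq hX R).1)
    (.of_forall fun R => ae_of_all _ fun ω => ?_) hX.norm.integrable_sq
    (ae_of_all _ fun ω => tendsto_const_nhds.congr' ?_)
  · simpa using h
  · rw [Real.norm_eq_abs, abs_of_nonneg (Set.indicator_nonneg (fun _ _ => by positivity) _)]
    exact Set.indicator_le_self' (fun _ _ => by positivity) _
  · filter_upwards [eventually_gt_atTop ‖X ω‖] with R hR
    exact (Set.indicator_of_notMem (not_le.mpr hR) _).symm

theorem distortion_le_add_integral_indicator [IsFiniteMeasure P] (hX : MemLp X 2 P)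
    {ι κ : Type*} [Finite ι] [Nonempty ι] [Finite κ] [Nonempty κ] {x : ι → E} {y : κ → E}
    {B : ℝ} (hy : ∀ t, ‖y t‖ ≤ B) (hx : ∀ i, 3 * B < ‖x i‖ ∨ ∃ t, y t = x i) :
    distortion P X y ≤
      distortion P X x + 4 * ∫ ω, {z : E | B ≤ ‖z‖}.indicator (fun z => ‖z‖ ^ 2) (X ω) ∂P := by
  rw [distortion, distortion, ← integral_const_mul,
    ← integral_add (integrable_iInf_dist_sq hX x) ((integrable_indicator_norm_sq hX B).const_mul 4)]
  exact integral_mono (integrable_iInf_dist_sq hX y)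
    ((integrable_iInf_dist_sq hX x).add ((integrable_indicator_norm_sq hX B).const_mul 4))
    fun ω => iInf_dist_sq_le_add_indicator hy hx (X ω)

theorem exists_distortion_lt_of_exists_norm_gt [IsFiniteMeasure P] (hX : MemLp X 2 P)
    {n : ℕ} [NeZero n] {ε : ℝ} (hε : 0 < ε) :
    ∃ R, ∀ x : Fin (n + 1) → E, (∃ i, R < ‖x i‖) →
      ∃ y : Fin n → E, distortion P X y < distortion P X x + ε := by
  obtain ⟨R₀, hR₀⟩ := eventually_atTop.mp <|
    (tendsto_integral_indicator_norm_sq hX).eventually (gt_mem_nhds (by positivity : 0 < ε / 4))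
  set M : ℕ → ℝ := fun j => max R₀ 0 * 3 ^ j with hM_def
  have hM : Monotone M := fun a b hab =>
    mul_le_mul_of_nonneg_left (pow_le_pow_right₀ (by norm_num) hab) (le_max_right _ _)
  have hM_succ (j : ℕ) : M (j + 1) = 3 * M j := by simp only [hM_def, pow_succ]; ring
  refine ⟨M (n + 1), fun x ⟨i₀, hi₀⟩ => ?_⟩
  classical
  -- the `n` points other than `x i₀` miss one of the `n + 1` intervals `(M j, 3 M j]`
  obtain ⟨j, hjn, hgap⟩ := exists_forall_notMem_Ioc_of_monotone hM
    ((Finset.univ.erase i₀).image fun i => ‖x i‖)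
  have hj : j ≤ n := hjn.trans (Finset.card_image_le.trans (by simp))
  have hi₀_far : 3 * M j < ‖x i₀‖ := hM_succ j ▸ (hM (by omega)).trans_lt hi₀
  obtain ⟨y, hy, hxy⟩ := exists_bounded_pred_tuple_of_gap x (by positivity) hi₀_far fun i => by
    rcases eq_or_ne i i₀ with rfl | hne
    · exact .inr hi₀_far
    have := hgap (‖x i‖) (Finset.mem_image_of_mem _ (Finset.mem_erase.mpr ⟨hne, Finset.mem_univ _⟩))
    rw [Set.mem_Ioc, hM_succ, not_and_or, not_lt, not_le] at this
    exact this
  have h_tail := hR₀ (M j) ((le_max_left _ _).trans (le_mul_of_one_le_right (le_max_right _ _)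
    (one_le_pow₀ (by norm_num))))
  refine ⟨y, (distortion_le_add_integral_indicator hX hy hxy).trans_lt ?_⟩
  linarith

end Distortion

end

theorem lloyd_iterates_bounded_general
    {Ω : Type*} [MeasurableSpace Ω] (P : Measure Ω) [IsProbabilityMeasure P]
    {d N : ℕ} (hN : 1 < N)
    (X : Ω → EuclideanSpace ℝ (Fin d)) (hX : MemLp X 2 P)
    (c : ℝ)
    (hc : c < sInf {r : ℝ | ∃ y : Fin (N - 1) → EuclideanSpace ℝ (Fin d),
        r = ∫ ω, (⨅ j, dist (X ω) (y j) ^ 2) ∂P})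
    (x : ℕ → Fin N → EuclideanSpace ℝ (Fin d))
    (hG : ∀ k, ∫ ω, (⨅ i, dist (X ω) (x k i) ^ 2) ∂P ≤ c) :
    ∃ R : ℝ, ∀ k i, ‖x k i‖ ≤ R := by
  obtain ⟨n, rfl⟩ := Nat.exists_eq_add_one_of_ne_zero (by omega : N ≠ 0)
  have : NeZero n := ⟨by omega⟩
  rw [Nat.add_sub_cancel] at hc
  change c < sInf {r : ℝ | ∃ y : Fin n → _, r = distortion P X y} at hc
  change ∀ k, distortion P X (x k) ≤ c at hG
  obtain ⟨R, hR⟩ := exists_distortion_lt_of_exists_norm_gt hX (n := n) (sub_pos.mpr hc)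
  refine ⟨R, fun k i => not_lt.mp fun hi => ?_⟩
  obtain ⟨y, hy⟩ := hR (x k) ⟨i, hi⟩
  have h_opt : sInf {r : ℝ | ∃ y : Fin n → _, r = distortion P X y} ≤ distortion P X y :=
    csInf_le ⟨0, by rintro _ ⟨y', rfl⟩; exact distortion_nonneg y'⟩ ⟨y, rfl⟩
  linarith [hG k]

/-- Any sequence of `N`-tuples whose distortion stays below a level `c` strictly
smaller than the optimal distortion at level `N − 1` is bounded; in particular the
Lloyd iterates started under the splitting assumption are bounded. -/
theorem lloyd_iterates_bounded
    {Ω : Type*} [MeasurableSpace Ω] (P : Measure Ω) [IsProbabilityMeasure P]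
    {d N : ℕ} (hN : 1 < N)
    (X : Ω → EuclideanSpace ℝ (Fin d)) (hXm : Measurable X) (hX : MemLp X 2 P)
    (c : ℝ)
    (hc : c < sInf {r : ℝ | ∃ y : Fin (N - 1) → EuclideanSpace ℝ (Fin d),
        r = ∫ ω, (⨅ j, dist (X ω) (y j) ^ 2) ∂P})
    (x : ℕ → Fin N → EuclideanSpace ℝ (Fin d))
    (hG : ∀ k, ∫ ω, (⨅ i, dist (X ω) (x k i) ^ 2) ∂P ≤ c) :
    ∃ R : ℝ, ∀ k i, ‖x k i‖ ≤ R :=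
  lloyd_iterates_bounded_general P hN X hX c hc x hG
end

section
/- Suppose a subsequence of Lloyd iterate grids Γ^(φ(k)) converges to a grid Γ^(∞) of N pairwise distinct points, and the boundaries of the Voronoi cells of Γ^(∞) are P_X-negligible. Then for every Y ∈ L^1(P), E(Y | X̂^{Γ^(φ(k))}) → E(Y | X̂^{Γ^(∞)}) almost surely as k → ∞. -/
/-!
Off the null set of cell boundaries, `X ω` lies in the interior of its limiting Voronoi cell `j`,
hence strictly closer to `xlim j` than to every other limiting centre; as the grids converge,
`X ω` then lies in cell `j` of the `k`-th grid for all large `k`. Consequently the atoms of the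
quantizations converge a.e. to the atoms of the limiting quantization. Given a finitely-valued
variable, the conditional expectation is the average of `Y` over the atom of `ω`, and by dominated
convergence these averages converge as soon as the limiting atom has positive mass, which holds
for a.e. `ω`.
-/

open MeasureTheory Filter Topology

/-- Nearest-neighbour projection onto a grid along a given Voronoi partition. -/
noncomputable def nnProj {d N : ℕ} (x : Fin N → EuclideanSpace ℝ (Fin d))
    (C : Fin N → Set (EuclideanSpace ℝ (Fin d))) (ξ : EuclideanSpace ℝ (Fin d)) :
    EuclideanSpace ℝ (Fin d) :=
  ∑ i, (C i).indicator (fun _ => x i) ξ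

open Set

section CountableRange

variable {Ω E : Type*} {f : Ω → E}

lemma ae_measure_preimage_singleton_ne_zero [MeasurableSpace Ω] (μ : Measure Ω)
    (hf : (range f).Countable) : ∀ᵐ ω ∂μ, μ (f ⁻¹' {f ω}) ≠ 0 := by
  have hnull : μ (⋃ v ∈ range f ∩ {v | μ (f ⁻¹' {v}) = 0}, f ⁻¹' {v}) = 0 :=
    (measure_biUnion_null_iff (hf.mono inter_subset_left)).2 fun v hv => hv.2
  refine measure_mono_null (fun ω hω => ?_) hnull
  simp only [mem_iUnion]
  exact ⟨f ω, ⟨mem_range_self ω, not_not.1 hω⟩, rfl⟩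

lemma stronglyMeasurable_comap_comp_of_countable_range {β : Type*} [MeasurableSpace E]
    [MeasurableSingletonClass E] [TopologicalSpace β] (hf : (range f).Countable) (G : E → β) :
    StronglyMeasurable[MeasurableSpace.comap f inferInstance] (G ∘ f) := by
  have := hf.to_subtype
  exact (StronglyMeasurable.of_discrete (f := fun v : range f => G v)).comp_measurable
    ((comap_measurable f).subtype_mk (h := mem_range_self))

end CountableRange

section FiniteRange

variable {Ω E F : Type*} [MeasurableSpace Ω] [MeasurableSpace E] [MeasurableSingletonClass E]
  [NormedAddCommGroup F] [NormedSpace ℝ F] {μ : Measure Ω} {f : Ω → E}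

open scoped Classical in
lemma setIntegral_preimage_eq_sum (hf : Measurable f) (hfin : (range f).Finite)
    (S : Set E) {Y : Ω → F} (hY : Integrable Y μ) :
    ∫ ω in f ⁻¹' S, Y ω ∂μ = ∑ v ∈ hfin.toFinset with v ∈ S, ∫ ω in f ⁻¹' {v}, Y ω ∂μ := by
  have hcover : f ⁻¹' S = ⋃ v ∈ hfin.toFinset.filter (· ∈ S), f ⁻¹' {v} := by
    ext ω; simp
  rw [hcover, integral_biUnion_finset _ (fun v _ => hf (measurableSet_singleton v))
    (fun v _ w _ hvw => (disjoint_singleton.2 hvw).preimage f) (fun v _ => hY.integrableOn)]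

variable [CompleteSpace F] [IsFiniteMeasure μ]

theorem condExp_comap_ae_eq_setAverage (hf : Measurable f) (hfin : (range f).Finite)
    {Y : Ω → F} (hY : Integrable Y μ) :
    μ[Y | MeasurableSpace.comap f inferInstance] =ᵐ[μ] fun ω => ⨍ ω' in f ⁻¹' {f ω}, Y ω' ∂μ := by
  set G : E → F := fun v => ⨍ ω' in f ⁻¹' {v}, Y ω' ∂μ
  have hGm : StronglyMeasurable[MeasurableSpace.comap f inferInstance] (G ∘ f) :=
    stronglyMeasurable_comap_comp_of_countable_range hfin.countable G
  have hGint : Integrable (G ∘ f) μ := by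
    obtain ⟨c, hc⟩ := (hfin.image fun v => ‖G v‖).bddAbove
    exact .of_bound (hGm.mono hf.comap_le).aestronglyMeasurable c
      (ae_of_all _ fun ω => hc ⟨f ω, mem_range_self ω, rfl⟩)
  refine (ae_eq_condExp_of_forall_setIntegral_eq hf.comap_le hY (fun _ _ _ => hGint.integrableOn)
    ?_ hGm.aestronglyMeasurable).symm
  rintro _ ⟨S, -, rfl⟩ -
  rw [setIntegral_preimage_eq_sum hf hfin S hGint, setIntegral_preimage_eq_sum hf hfin S hY]
  refine Finset.sum_congr rfl fun v _ => ?_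
  have hconst : ∫ ω in f ⁻¹' {v}, G (f ω) ∂μ = ∫ _ in f ⁻¹' {v}, G v ∂μ :=
    setIntegral_congr_fun (hf (measurableSet_singleton v)) fun ω hω => by rw [hω]
  rw [Function.comp_def, hconst, setIntegral_const, measure_smul_setAverage _ (measure_ne_top _ _)]

end FiniteRange

section SetAverage

variable {Ω F ι : Type*} [MeasurableSpace Ω] [NormedAddCommGroup F] [NormedSpace ℝ F]
  {μ : Measure Ω} {l : Filter ι} [l.IsCountablyGenerated] {A : ι → Set Ω} {B : Set Ω}

theorem tendsto_setIntegral_of_ae_eventually_mem_iff (hA : ∀ k, MeasurableSet (A k))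
    (hB : MeasurableSet B) (hAB : ∀ᵐ ω ∂μ, ∀ᶠ k in l, (ω ∈ A k ↔ ω ∈ B))
    {Y : Ω → F} (hY : Integrable Y μ) :
    Tendsto (fun k => ∫ ω in A k, Y ω ∂μ) l (𝓝 (∫ ω in B, Y ω ∂μ)) := by
  simp only [← integral_indicator (hA _), ← integral_indicator hB]
  refine tendsto_integral_filter_of_dominated_convergence (fun ω => ‖Y ω‖)
    (.of_forall fun k => hY.1.indicator (hA k))
    (.of_forall fun k => .of_forall fun ω => norm_indicator_le_norm_self Y ω) hY.norm ?_
  filter_upwards [hAB] with ω hω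
  refine tendsto_const_nhds.congr' ?_
  filter_upwards [hω] with k hk
  classical
  rw [indicator_apply, indicator_apply, hk]

theorem tendsto_setAverage_of_ae_eventually_mem_iff [IsFiniteMeasure μ]
    (hA : ∀ k, MeasurableSet (A k)) (hB : MeasurableSet B) (hB0 : μ B ≠ 0)
    (hAB : ∀ᵐ ω ∂μ, ∀ᶠ k in l, (ω ∈ A k ↔ ω ∈ B)) {Y : Ω → F} (hY : Integrable Y μ) :
    Tendsto (fun k => ⨍ ω in A k, Y ω ∂μ) l (𝓝 (⨍ ω in B, Y ω ∂μ)) := by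
  have hmeas : Tendsto (fun k => μ.real (A k)) l (𝓝 (μ.real B)) := by
    simpa using tendsto_setIntegral_of_ae_eventually_mem_iff hA hB hAB (integrable_const (1 : ℝ))
  simp only [setAverage_eq]
  exact (hmeas.inv₀ ((measureReal_ne_zero_iff (measure_ne_top _ _)).2 hB0)).smul
    (tendsto_setIntegral_of_ae_eventually_mem_iff hA hB hAB hY)

end SetAverage

theorem dist_lt_of_mem_interior_of_forall_dist_le {E : Type*} [NormedAddCommGroup E]
    [InnerProductSpace ℝ E] {s : Set E} {a b ξ : E} (hab : a ≠ b)
    (hs : ∀ η ∈ s, dist η a ≤ dist η b) (hξ : ξ ∈ interior s) : dist ξ a < dist ξ b := by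
  have hpath : Tendsto (fun t : ℝ => ξ + t • (b - a)) (𝓝[>] 0) (𝓝 ξ) := by
    have : Continuous fun t : ℝ => ξ + t • (b - a) := by fun_prop
    simpa using (this.tendsto 0).mono_left nhdsWithin_le_nhds
  obtain ⟨t, hts, ht⟩ :=
    ((hpath.eventually (isOpen_interior.mem_nhds hξ)).and self_mem_nhdsWithin).exists
  have hle := hs _ (interior_subset hts)
  -- moving from `ξ` towards `b` changes `dist · b ^ 2 - dist · a ^ 2` by `-2 t ‖b - a‖ ^ 2`
  have hshift : dist (ξ + t • (b - a)) b ^ 2 - dist (ξ + t • (b - a)) a ^ 2 =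
      dist ξ b ^ 2 - dist ξ a ^ 2 - 2 * t * ‖b - a‖ ^ 2 := by
    have hinner : inner ℝ (ξ - b) (b - a) = inner ℝ (ξ - a) (b - a) - ‖b - a‖ ^ 2 := by
      rw [← real_inner_self_eq_norm_sq, ← inner_sub_left]
      congr 1
      abel
    simp only [dist_eq_norm]
    rw [show ξ + t • (b - a) - b = (ξ - b) + t • (b - a) by abel,
      show ξ + t • (b - a) - a = (ξ - a) + t • (b - a) by abel,
      norm_add_sq_real, norm_add_sq_real, inner_smul_right, inner_smul_right, hinner]
    ring
  have hpos : 0 < 2 * t * ‖b - a‖ ^ 2 := by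
    have hba : 0 < ‖b - a‖ := norm_pos_iff.2 (sub_ne_zero.2 hab.symm)
    have ht' : 0 < t := ht
    positivity
  have hsq := pow_le_pow_left₀ dist_nonneg hle 2
  exact lt_of_pow_lt_pow_left₀ 2 dist_nonneg (by linarith)

theorem eventually_mem_cell_of_tendsto {α ι κ : Type*} [PseudoMetricSpace α] [Finite ι]
    {l : Filter κ} {x : κ → ι → α} {y : ι → α} (hx : Tendsto x l (𝓝 y)) {C : κ → ι → Set α} {ξ : α} {j : ι}
    (hcover : ∀ k, ∃ i, ξ ∈ C k i)
    (hvor : ∀ k i, ξ ∈ C k i → ∀ i', dist ξ (x k i) ≤ dist ξ (x k i'))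
    (hstrict : ∀ i ≠ j, dist ξ (y j) < dist ξ (y i)) :
    ∀ᶠ k in l, ξ ∈ C k j := by
  have hnear : ∀ᶠ k in l, ∀ i ≠ j, dist ξ (x k j) < dist ξ (x k i) := by
    refine eventually_all.2 fun i => ?_
    by_cases hij : i = j
    · exact .of_forall fun _ h => absurd hij h
    have hxi := tendsto_pi_nhds.1 hx i
    have hxj := tendsto_pi_nhds.1 hx j
    filter_upwards [(tendsto_const_nhds.dist hxj).eventually_lt (tendsto_const_nhds.dist hxi)
      (hstrict i hij)] with k hk _ using hk
  filter_upwards [hnear] with k hk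
  obtain ⟨i, hi⟩ := hcover k
  obtain rfl : i = j := by
    by_contra hij
    exact not_lt.2 (hvor k i hi j) (hk i hij)
  exact hi

theorem eventually_eq_iff_of_tendsto {α ι κ : Type*} [TopologicalSpace α] [T2Space α]
    {l : Filter κ} {x : κ → ι → α} {y : ι → α} (hx : Tendsto x l (𝓝 y))
    (hy : Function.Injective y) (i j : ι) : ∀ᶠ k in l, (x k i = x k j ↔ y i = y j) := by
  by_cases hij : i = j
  · simp [hij]
  have hxij := (tendsto_pi_nhds.1 hx i).prodMk_nhds (tendsto_pi_nhds.1 hx j)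
  filter_upwards [hxij.eventually ((isOpen_ne_fun continuous_fst continuous_snd).mem_nhds
    (hy.ne hij))] with k hk
  simp only [hk, hy.ne hij]

theorem exists_eventually_mem_cell_of_notMem_frontier {E ι κ : Type*} [NormedAddCommGroup E]
    [InnerProductSpace ℝ E] [Finite ι] {l : Filter κ} {x : κ → ι → E} {y : ι → E}
    (hx : Tendsto x l (𝓝 y)) {C : κ → ι → Set E} {D : ι → Set E}
    (hCcover : ∀ k ξ, ∃ i, ξ ∈ C k i)
    (hCvor : ∀ k i, ∀ ξ ∈ C k i, ∀ j, dist ξ (x k i) ≤ dist ξ (x k j))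
    (hDcover : ∀ ξ, ∃ i, ξ ∈ D i) (hDvor : ∀ i, ∀ ξ ∈ D i, ∀ j, dist ξ (y i) ≤ dist ξ (y j))
    (hy : Function.Injective y) {ξ : E} (hξ : ξ ∉ ⋃ i, frontier (D i)) :
    ∃ j, ξ ∈ D j ∧ ∀ᶠ k in l, ξ ∈ C k j := by
  obtain ⟨j, hj⟩ := hDcover ξ
  have hint : ξ ∈ interior (D j) := by_contra fun h => hξ (mem_iUnion.2 ⟨j, subset_closure hj, h⟩)
  refine ⟨j, hj, eventually_mem_cell_of_tendsto hx (fun k => hCcover k ξ)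
    (fun k i h => hCvor k i ξ h) fun i hi => ?_⟩
  exact dist_lt_of_mem_interior_of_forall_dist_le (hy.ne hi.symm) (fun η hη => hDvor j η hη i) hint

theorem ae_tendsto_condExp_comap {Ω E F ι : Type*} [MeasurableSpace Ω] [MeasurableSpace E]
    [MeasurableSingletonClass E] [NormedAddCommGroup F] [NormedSpace ℝ F] [CompleteSpace F]
    {μ : Measure Ω} [IsFiniteMeasure μ] [Countable ι] {l : Filter ι} [l.IsCountablyGenerated]
    {f : ι → Ω → E} {g : Ω → E} (hf : ∀ k, Measurable (f k)) (hfin : ∀ k, (range (f k)).Finite)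
    (hg : Measurable g) (hgfin : (range g).Finite)
    (hfg : ∀ᵐ ω ∂μ, ∀ᵐ ω' ∂μ, ∀ᶠ k in l, (f k ω' = f k ω ↔ g ω' = g ω))
    {Y : Ω → F} (hY : Integrable Y μ) :
    ∀ᵐ ω ∂μ, Tendsto (fun k => μ[Y | MeasurableSpace.comap (f k) inferInstance] ω) l
      (𝓝 (μ[Y | MeasurableSpace.comap g inferInstance] ω)) := by
  filter_upwards [ae_all_iff.2 fun k => condExp_comap_ae_eq_setAverage (hf k) (hfin k) hY,
    condExp_comap_ae_eq_setAverage hg hgfin hY,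
    ae_measure_preimage_singleton_ne_zero μ hgfin.countable, hfg] with ω hωf hωg hω0 hω
  simp only [hωf, hωg]
  exact tendsto_setAverage_of_ae_eventually_mem_iff (fun k => hf k (measurableSet_singleton _))
    (hg (measurableSet_singleton _)) hω0 hω hY

section NearestNeighbourProjection

variable {d N : ℕ} {x : Fin N → EuclideanSpace ℝ (Fin d)}
  {C : Fin N → Set (EuclideanSpace ℝ (Fin d))}

lemma nnProj_eq_of_mem (hpart : ∀ ξ, ∃! i, ξ ∈ C i) {ξ : EuclideanSpace ℝ (Fin d)} {i : Fin N}
    (hi : ξ ∈ C i) : nnProj x C ξ = x i := by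
  rw [nnProj, Finset.sum_eq_single_of_mem i (Finset.mem_univ i), indicator_of_mem hi]
  exact fun j _ hj => indicator_of_notMem (fun hj' => hj ((hpart ξ).unique hj' hi)) _

lemma measurable_nnProj (hC : ∀ i, MeasurableSet (C i)) : Measurable (nnProj x C) :=
  Finset.measurable_sum _ fun i _ => measurable_const.indicator (hC i)

lemma finite_range_nnProj (hpart : ∀ ξ, ∃! i, ξ ∈ C i) : (range (nnProj x C)).Finite :=
  (finite_range x).subset <| range_subset_iff.2 fun ξ =>
    let ⟨i, hi, _⟩ := hpart ξ
    ⟨i, (nnProj_eq_of_mem hpart hi).symm⟩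

end NearestNeighbourProjection

theorem condexp_along_converging_grids_general
    {Ω : Type*} [MeasurableSpace Ω] (P : Measure Ω) [IsProbabilityMeasure P]
    {d N : ℕ}
    (X : Ω → EuclideanSpace ℝ (Fin d)) (hXm : Measurable X)
    (x : ℕ → Fin N → EuclideanSpace ℝ (Fin d))
    (C : ℕ → Fin N → Set (EuclideanSpace ℝ (Fin d)))
    (hCmeas : ∀ k i, MeasurableSet (C k i))
    (hCpart : ∀ k ξ, ∃! i, ξ ∈ C k i)
    (hCvor : ∀ k i, ∀ ξ ∈ C k i, ∀ j, dist ξ (x k i) ≤ dist ξ (x k j))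
    (xlim : Fin N → EuclideanSpace ℝ (Fin d))
    (Clim : Fin N → Set (EuclideanSpace ℝ (Fin d)))
    (hCmeas' : ∀ i, MeasurableSet (Clim i))
    (hCpart' : ∀ ξ, ∃! i, ξ ∈ Clim i)
    (hCvor' : ∀ i, ∀ ξ ∈ Clim i, ∀ j, dist ξ (xlim i) ≤ dist ξ (xlim j))
    (hdistinct : ∀ i j, i ≠ j → xlim i ≠ xlim j)
    (hbd : P {ω | X ω ∈ ⋃ i, frontier (Clim i)} = 0)
    (hlim : Tendsto x atTop (𝓝 xlim))
    (Y : Ω → ℝ) (hY : Integrable Y P) :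
    ∀ᵐ ω ∂P, Tendsto
      (fun k => (P[Y | MeasurableSpace.comap
          (fun ω' => nnProj (x k) (C k) (X ω')) inferInstance]) ω)
      atTop
      (𝓝 ((P[Y | MeasurableSpace.comap
          (fun ω' => nnProj xlim Clim (X ω')) inferInstance]) ω)) := by
  have hinj : Function.Injective xlim := fun i j h => by_contra fun hij => hdistinct i j hij h
  have hcell : ∀ᵐ ω ∂P, ∃ j, X ω ∈ Clim j ∧ ∀ᶠ k in atTop, X ω ∈ C k j := by
    filter_upwards [measure_eq_zero_iff_ae_notMem.1 hbd] with ω hω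
    exact exists_eventually_mem_cell_of_notMem_frontier hlim (fun k ξ => (hCpart k ξ).exists)
      hCvor (fun ξ => (hCpart' ξ).exists) hCvor' hinj hω
  refine ae_tendsto_condExp_comap (fun k => (measurable_nnProj (hCmeas k)).comp hXm)
    (fun k => (finite_range_nnProj (hCpart k)).subset (range_comp_subset_range X _))
    ((measurable_nnProj hCmeas').comp hXm)
    ((finite_range_nnProj hCpart').subset (range_comp_subset_range X _)) ?_ hY
  filter_upwards [hcell] with ω ⟨j, hj, hjk⟩
  filter_upwards [hcell] with ω' ⟨i, hi, hik⟩
  filter_upwards [hjk, hik, eventually_eq_iff_of_tendsto hlim hinj i j] with k hk hk' hij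
  simpa only [Function.comp_apply, nnProj_eq_of_mem (hCpart k) hk,
    nnProj_eq_of_mem (hCpart k) hk', nnProj_eq_of_mem hCpart' hj, nnProj_eq_of_mem hCpart' hi]
    using hij

/-- If a subsequence of Lloyd grids converges to a limiting grid of pairwise distinct
points whose Voronoi cell boundaries are `P_X`-negligible, then conditional
expectations given the corresponding quantizations converge a.s. -/
theorem condexp_along_converging_grids
    {Ω : Type*} [MeasurableSpace Ω] (P : Measure Ω) [IsProbabilityMeasure P]
    {d N : ℕ} (hN : 0 < N)
    (X : Ω → EuclideanSpace ℝ (Fin d)) (hXm : Measurable X)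
    (x : ℕ → Fin N → EuclideanSpace ℝ (Fin d))
    (C : ℕ → Fin N → Set (EuclideanSpace ℝ (Fin d)))
    (hCmeas : ∀ k i, MeasurableSet (C k i))
    (hCpart : ∀ k ξ, ∃! i, ξ ∈ C k i)
    (hCvor : ∀ k i, ∀ ξ ∈ C k i, ∀ j, dist ξ (x k i) ≤ dist ξ (x k j))
    (xlim : Fin N → EuclideanSpace ℝ (Fin d))
    (Clim : Fin N → Set (EuclideanSpace ℝ (Fin d)))
    (hCmeas' : ∀ i, MeasurableSet (Clim i))
    (hCpart' : ∀ ξ, ∃! i, ξ ∈ Clim i)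
    (hCvor' : ∀ i, ∀ ξ ∈ Clim i, ∀ j, dist ξ (xlim i) ≤ dist ξ (xlim j))
    (hdistinct : ∀ i j, i ≠ j → xlim i ≠ xlim j)
    (hbd : P {ω | X ω ∈ ⋃ i, frontier (Clim i)} = 0)
    (hlim : Tendsto x atTop (𝓝 xlim))
    (Y : Ω → ℝ) (hY : Integrable Y P) :
    ∀ᵐ ω ∂P, Tendsto
      (fun k => (P[Y | MeasurableSpace.comap
          (fun ω' => nnProj (x k) (C k) (X ω')) inferInstance]) ω)
      atTop
      (𝓝 ((P[Y | MeasurableSpace.comap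
          (fun ω' => nnProj xlim Clim (X ω')) inferInstance]) ω)) :=
  condexp_along_converging_grids_general P X hXm x C hCmeas hCpart hCvor xlim Clim hCmeas' hCpart'
    hCvor' hdistinct hbd hlim Y hY
end
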